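/- Let p, q be primes, n ≥ 2 and c ≥ 1. For each x ∈ V there is an automorphism φ*_x of G_{V,p,c} that sends the generator corresponding to v to the generator corresponding to v + x, for every v ∈ V; moreover the map x ↦ φ*_x is a group homomorphism from the additive group (V, +) to Aut(G_{V,p,c}). -/

import Mathlib

/-- The commutator `[x, y] = x⁻¹ * y⁻¹ * x * y`. -/
def pComm {G : Type*} [Group G] (x y : G) : G := x⁻¹ * y⁻¹ * x * y

/-- The left-normed higher commutator: `lnComm x [y₁, …, y_m] = [x, y₁, …, y_m]`,
where `[x₁, …, x_m] = [[x₁, …, x_{m-1}], x_m]`. -/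
def lnComm {G : Type*} [Group G] : G → List G → G
  | x, [] => x
  | x, y :: l => lnComm (pComm x y) l

/-- The relations of the presented group `H_{p,c}`. -/
def Hrels (p c : ℕ) : Set (FreeGroup (Fin 2)) :=
  {w | (∃ i : Fin 2, w = FreeGroup.of i ^ p) ∨
       (∃ (i : Fin 2) (t : Fin c → Fin 2),
          w = lnComm (FreeGroup.of i) ((List.ofFn t).map FreeGroup.of))}

/-- The group `H_{p,c}` presented by two generators `a₁, a₂` with relations
`a₁^p = a₂^p = 1` and `[a_{i₀}, a_{i₁}, …, a_{i_c}] = 1` for all tuples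
`(i₀, …, i_c) ∈ {1,2}^{c+1}`. -/
abbrev Hgroup (p c : ℕ) : Type := PresentedGroup (Hrels p c)

/-- The relations of the presented group `G_{V,p,c}`, where `V = (ZMod q)^n`:
every generator `v ∈ V` satisfies `v^p = 1`, every left-normed commutator of
`c + 1` generators is trivial, and `[v, w] = 1` whenever
`v - w ∈ V₁ ∪ ⋯ ∪ V_n`, i.e. whenever `v` and `w` agree in some coordinate. -/
def Grels (p q c n : ℕ) : Set (FreeGroup (Fin n → ZMod q)) :=
  {g | (∃ v : Fin n → ZMod q, g = FreeGroup.of v ^ p) ∨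
       (∃ (v : Fin n → ZMod q) (t : Fin c → (Fin n → ZMod q)),
          g = lnComm (FreeGroup.of v) ((List.ofFn t).map FreeGroup.of)) ∨
       (∃ v w : Fin n → ZMod q, (∃ i : Fin n, (v - w) i = 0) ∧
          g = pComm (FreeGroup.of v) (FreeGroup.of w))}

/-- The group `G_{V,p,c}` presented with the vector space `V = (ZMod q)^n` as
set of generators, subject to the relations `Grels p q c n`. -/
abbrev Ggroup (p q c n : ℕ) : Type := PresentedGroup (Grels p q c n)
section Aux

variable {G H : Type*} [Group G] [Group H]

lemma map_pComm (f : G →* H) (a b : G) : f (pComm a b) = pComm (f a) (f b) := by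
  simp [pComm]

lemma map_lnComm (f : G →* H) (a : G) (l : List G) :
    f (lnComm a l) = lnComm (f a) (l.map f) := by
  induction l generalizing a with
  | nil => simp [lnComm]
  | cons y l ih => simp [lnComm, ih, map_pComm]

lemma mk_rel_one {α : Type*} {rels : Set (FreeGroup α)} {r : FreeGroup α} (hr : r ∈ rels) :
    PresentedGroup.mk rels r = 1 := by
  have : r ∈ Subgroup.normalClosure rels := Subgroup.subset_normalClosure hr
  exact (QuotientGroup.eq_one_iff r).2 this

end Aux

section Gfacts

variable {p q c n : ℕ}

lemma G_pow_one (v : Fin n → ZMod q) :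
    (PresentedGroup.of v : Ggroup p q c n) ^ p = 1 := by
  have : PresentedGroup.mk (Grels p q c n) (FreeGroup.of v ^ p) = 1 :=
    mk_rel_one (Or.inl ⟨v, rfl⟩)
  rw [map_pow] at this
  exact this

lemma G_lnComm_one (v : Fin n → ZMod q) (t : Fin c → (Fin n → ZMod q)) :
    lnComm (PresentedGroup.of v : Ggroup p q c n)
      ((List.ofFn t).map PresentedGroup.of) = 1 := by
  have : PresentedGroup.mk (Grels p q c n)
      (lnComm (FreeGroup.of v) ((List.ofFn t).map FreeGroup.of)) = 1 :=
    mk_rel_one (Or.inr (Or.inl ⟨v, t, rfl⟩))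
  rw [map_lnComm] at this
  rw [List.map_map] at this
  exact this

lemma G_pComm_one (v w : Fin n → ZMod q) (h : ∃ i, (v - w) i = 0) :
    pComm (PresentedGroup.of v : Ggroup p q c n) (PresentedGroup.of w) = 1 := by
  have : PresentedGroup.mk (Grels p q c n)
      (pComm (FreeGroup.of v) (FreeGroup.of w)) = 1 :=
    mk_rel_one (Or.inr (Or.inr ⟨v, w, h, rfl⟩))
  rw [map_pComm] at this
  exact this

lemma G_rels_killed (x : Fin n → ZMod q) :
    ∀ r ∈ Grels p q c n,
      FreeGroup.lift (fun v => (PresentedGroup.of (v + x) : Ggroup p q c n)) r = 1 := by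
  rintro r (⟨v, rfl⟩ | ⟨v, t, rfl⟩ | ⟨v, w, ⟨i, hi⟩, rfl⟩)
  · simp [G_pow_one]
  · rw [map_lnComm]
    have h1 : ((List.ofFn t).map FreeGroup.of).map
        (FreeGroup.lift (fun v => (PresentedGroup.of (v + x) : Ggroup p q c n)))
        = (List.ofFn (fun i => t i + x)).map PresentedGroup.of := by
      simp [List.map_map, Function.comp_def]
    rw [h1, FreeGroup.lift_apply_of]
    exact G_lnComm_one (v + x) _
  · rw [map_pComm, FreeGroup.lift_apply_of, FreeGroup.lift_apply_of]
    refine G_pComm_one _ _ ⟨i, ?_⟩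
    simpa using hi

/-- The shift endomorphism. -/
noncomputable def Gshift (p q c n : ℕ) (x : Fin n → ZMod q) :
    Ggroup p q c n →* Ggroup p q c n :=
  PresentedGroup.toGroup (G_rels_killed x)

@[simp] lemma Gshift_of (x v : Fin n → ZMod q) :
    Gshift p q c n x (PresentedGroup.of v) = PresentedGroup.of (v + x) :=
  PresentedGroup.toGroup.of _

lemma Gshift_comp (x y : Fin n → ZMod q) :
    (Gshift p q c n x).comp (Gshift p q c n y) = Gshift p q c n (y + x) := by
  ext v
  simp [add_assoc]

lemma Gshift_inv (x : Fin n → ZMod q) (g : Ggroup p q c n) :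
    Gshift p q c n (-x) (Gshift p q c n x g) = g := by
  have h : (Gshift p q c n (-x)).comp (Gshift p q c n x) = MonoidHom.id _ := by
    ext v; simp
  exact DFunLike.congr_fun h g

/-- The shift automorphism. -/
noncomputable def Gaut (p q c n : ℕ) (x : Fin n → ZMod q) : MulAut (Ggroup p q c n) where
  toFun := Gshift p q c n x
  invFun := Gshift p q c n (-x)
  left_inv := Gshift_inv x
  right_inv := fun g => by simpa using Gshift_inv (-x) g
  map_mul' := map_mul _

end Gfacts


/-- For primes `p, q`, `n ≥ 2` and `c ≥ 1`: for each `x ∈ V` there is an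
automorphism `φ*_x` of `G_{V,p,c}` sending the generator corresponding to `v`
to the generator corresponding to `v + x` for every `v ∈ V`, and
`x ↦ φ*_x` is a group homomorphism from the additive group `(V, +)` to
`Aut(G_{V,p,c})`. -/
theorem stmt_9 (p q : ℕ) (hp : p.Prime) (hq : q.Prime) (n c : ℕ)
    (hn : 2 ≤ n) (hc : 1 ≤ c) :
    ∃ Φ : Multiplicative (Fin n → ZMod q) →* MulAut (Ggroup p q c n),
      ∀ (x v : Fin n → ZMod q),
        Φ (Multiplicative.ofAdd x) (PresentedGroup.of v) =
          PresentedGroup.of (v + x) := by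
  refine ⟨{ toFun := fun x => Gaut p q c n x.toAdd
            map_one' := ?_
            map_mul' := ?_ }, ?_⟩
  · ext g
    have h : (Gaut p q c n 0).toMonoidHom = MonoidHom.id _ := by
      ext v; simp [Gaut]
    exact DFunLike.congr_fun h g
  · intro a b
    ext g
    have h : (Gaut p q c n (a * b).toAdd).toMonoidHom =
        ((Gaut p q c n a.toAdd).toMonoidHom).comp (Gaut p q c n b.toAdd).toMonoidHom := by
      ext v; simp only [Gaut, MulEquiv.coe_mk, Equiv.coe_fn_mk, MonoidHom.coe_comp, Function.comp_apply, Gshift_of, MulEquiv.toMonoidHom_eq_coe, MonoidHom.coe_coe]; rw [toAdd_mul, add_comm (Multiplicative.toAdd a), ← add_assoc]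
    exact DFunLike.congr_fun h g
  · intro x v
    simp [Gaut]
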